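/- If z is a complex number with arg z ∈ (0, π/4), then Im κ₁(z) > 0; if arg z ∈ (−π/4, 0), then Im κ₁(z) < 0. -/

import Mathlib

open Real Complex

/-- Analytic extension of the degree-1 arc-cosine kernel to the slit plane,
using principal branches of `log` and the square root (`cpow`). -/
noncomputable def K1C (z : ℂ) : ℂ :=
  (z * ((Real.pi : ℂ) + Complex.I * Complex.log (z + Complex.I * ((1 - z ^ 2) ^ ((1 : ℂ) / 2))))
    + (1 - z ^ 2) ^ ((1 : ℂ) / 2)) / (Real.pi : ℂ)

/-!
Put `ζ = z + i√(1 - z²)` and `θ = -i log ζ`, so that `ζ = e^{iθ}`, `ζ⁻¹ = z - i√(1 - z²)`,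
`z = cos θ`, `√(1 - z²) = sin θ` and `π κ₁(z) = (π - θ) cos θ + sin θ`. When `Re z > 0` and
`Im z ≠ 0`, both `ζ + ζ⁻¹ = 2z` and `(ζ - ζ⁻¹)/i = 2√(1 - z²)` have positive real part, which
forces `ζ` into the open first quadrant, i.e. `a = Re θ ∈ (0, π/2)`. With `b = Im θ`,
`Im z = -sin a sinh b` and `π Im κ₁(z) = -((π - a) sin a sinh b + cos a (b cosh b - sinh b))`,
and since `sinh b < b cosh b` for `b > 0`, both have the sign of `-b`.
-/

theorem Real.sinh_lt_mul_cosh {t : ℝ} (ht : 0 < t) : Real.sinh t < t * Real.cosh t := by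
  have hmono : StrictMonoOn (fun x ↦ x * Real.cosh x - Real.sinh x) (Set.Ici 0) := by
    refine strictMonoOn_of_deriv_pos (convex_Ici 0) (by fun_prop) fun x hx ↦ ?_
    rw [interior_Ici, Set.mem_Ioi] at hx
    have hderiv : HasDerivAt (fun x ↦ x * Real.cosh x - Real.sinh x) (x * Real.sinh x) x :=
      (((hasDerivAt_id' x).fun_mul (Real.hasDerivAt_cosh x)).fun_sub
        (Real.hasDerivAt_sinh x)).congr_deriv (by ring)
    rw [hderiv.deriv]
    exact mul_pos hx (Real.sinh_pos_iff.mpr hx)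
  simpa using hmono Set.self_mem_Ici (Set.mem_Ici.mpr ht.le) ht

theorem sin_mul_sinh_add_cos_mul_pos {a b : ℝ} (ha : a ∈ Set.Ioo 0 (π / 2)) (hb : 0 < b) :
    0 < (π - a) * Real.sin a * Real.sinh b + Real.cos a * (b * Real.cosh b - Real.sinh b) := by
  have hsin : 0 < Real.sin a := Real.sin_pos_of_pos_of_lt_pi ha.1 (by linarith [ha.2, pi_pos])
  have hcos : 0 < Real.cos a := Real.cos_pos_of_mem_Ioo ⟨by linarith [ha.1, pi_pos], ha.2⟩
  have hπa : 0 < π - a := by linarith [ha.2, pi_pos]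
  have hsinh := Real.sinh_pos_iff.mpr hb
  have hgap := sub_pos.mpr (sinh_lt_mul_cosh hb)
  positivity

theorem sin_mul_sinh_add_cos_mul_neg {a b : ℝ} (ha : a ∈ Set.Ioo 0 (π / 2)) (hb : b < 0) :
    (π - a) * Real.sin a * Real.sinh b + Real.cos a * (b * Real.cosh b - Real.sinh b) < 0 := by
  have h := sin_mul_sinh_add_cos_mul_pos ha (neg_pos.mpr hb)
  rw [Real.sinh_neg, Real.cosh_neg] at h
  linarith

theorem Complex.cos_re (θ : ℂ) : (cos θ).re = Real.cos θ.re * Real.cosh θ.im := by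
  rw [cos_eq]
  simp [← ofReal_cos, ← ofReal_cosh, ← ofReal_sin, ← ofReal_sinh]

theorem Complex.cos_im (θ : ℂ) : (cos θ).im = -(Real.sin θ.re * Real.sinh θ.im) := by
  rw [cos_eq]
  simp [← ofReal_cos, ← ofReal_cosh, ← ofReal_sin, ← ofReal_sinh]

theorem Complex.sin_im (θ : ℂ) : (sin θ).im = Real.cos θ.re * Real.sinh θ.im := by
  rw [sin_eq]
  simp [← ofReal_cos, ← ofReal_cosh, ← ofReal_sin, ← ofReal_sinh]

theorem im_cos_mul_pi_sub_add_sin (θ : ℂ) :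
    (Complex.cos θ * (π - θ) + Complex.sin θ).im =
      -((π - θ.re) * Real.sin θ.re * Real.sinh θ.im
        + Real.cos θ.re * (θ.im * Real.cosh θ.im - Real.sinh θ.im)) := by
  simp only [add_im, mul_im, sub_re, sub_im, ofReal_re, ofReal_im, cos_re, cos_im, sin_im]
  ring

theorem Complex.re_cpow_one_half_pos {x : ℂ} (hx : x ∈ slitPlane) :
    0 < (x ^ (1 / 2 : ℂ)).re := by
  have harg := neg_pi_lt_arg x
  have harg' := (arg_le_pi x).lt_of_ne (slitPlane_arg_ne_pi hx)
  rw [cpow_def_of_ne_zero (slitPlane_ne_zero hx), exp_re]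
  refine mul_pos (Real.exp_pos _) (Real.cos_pos_of_mem_Ioo ⟨?_, ?_⟩) <;>
    simp [log_im] <;> linarith

theorem Complex.re_pos_and_im_pos_of_add_inv_of_sub_inv {ζ : ℂ} (hre : 0 < (ζ + ζ⁻¹).re)
    (him : 0 < (ζ - ζ⁻¹).im) : 0 < ζ.re ∧ 0 < ζ.im := by
  have hfac : 0 < 1 + (normSq ζ)⁻¹ := by have := normSq_nonneg ζ; positivity
  have hre' : (ζ + ζ⁻¹).re = ζ.re * (1 + (normSq ζ)⁻¹) := by
    simp only [add_re, inv_re]; ring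
  have him' : (ζ - ζ⁻¹).im = ζ.im * (1 + (normSq ζ)⁻¹) := by
    simp only [sub_im, inv_im]; ring
  rw [hre', mul_pos_iff_of_pos_right hfac] at hre
  rw [him', mul_pos_iff_of_pos_right hfac] at him
  exact ⟨hre, him⟩

theorem Complex.arg_mem_Ioo_zero_pi_div_two_iff {z : ℂ} :
    arg z ∈ Set.Ioo 0 (π / 2) ↔ 0 < z.re ∧ 0 < z.im := by
  constructor
  · rintro ⟨h0, hπ⟩
    have hz : z ≠ 0 := by rintro rfl; simp at h0
    have hre : 0 < z.re :=
      (abs_arg_lt_pi_div_two_iff.mp (by rwa [abs_of_pos h0])).resolve_right hz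
    refine ⟨hre, (arg_nonneg_iff.mp h0.le).lt_of_ne fun him ↦ h0.ne' ?_⟩
    exact arg_eq_zero_iff.mpr ⟨hre.le, him.symm⟩
  · rintro ⟨hre, him⟩
    refine ⟨(arg_nonneg_iff.mpr him.le).lt_of_ne fun h ↦ him.ne' (arg_eq_zero_iff.mp h.symm).2,
      (abs_lt.mp (abs_arg_lt_pi_div_two_iff.mpr (Or.inl hre))).2⟩

theorem exists_cos_eq_and_K1C_eq {z : ℂ} (hre : 0 < z.re) (him : z.im ≠ 0) :
    ∃ θ : ℂ, θ.re ∈ Set.Ioo 0 (π / 2) ∧ Complex.cos θ = z ∧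
      K1C z = (Complex.cos θ * (π - θ) + Complex.sin θ) / π := by
  set s := (1 - z ^ 2) ^ (1 / 2 : ℂ) with hs
  have hs_sq : s ^ 2 = 1 - z ^ 2 := by
    rw [hs, one_div]; exact cpow_ofNat_inv_pow _ 2
  have hs_re : 0 < s.re := by
    refine re_cpow_one_half_pos (mem_slitPlane_iff.mpr (Or.inr ?_))
    have him_sq : (1 - z ^ 2).im = -(2 * z.re * z.im) := by simp [sq]; ring
    rw [him_sq]
    exact neg_ne_zero.mpr (mul_ne_zero (mul_ne_zero two_ne_zero hre.ne') him)
  set ζ := z + I * s with hζ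
  have hζ_mul : ζ * (z - I * s) = 1 := by linear_combination hs_sq - s ^ 2 * I_sq
  clear_value s ζ
  have hζ_ne : ζ ≠ 0 := left_ne_zero_of_mul_eq_one hζ_mul
  have hζ_inv : ζ⁻¹ = z - I * s := inv_eq_of_mul_eq_one_right hζ_mul
  have hζ_quadrant : 0 < ζ.re ∧ 0 < ζ.im := by
    refine re_pos_and_im_pos_of_add_inv_of_sub_inv ?_ ?_
    · rw [show ζ + ζ⁻¹ = 2 * z by rw [hζ_inv, hζ]; ring]
      simpa using hre
    · rw [show ζ - ζ⁻¹ = 2 * I * s by rw [hζ_inv, hζ]; ring]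
      simpa using hs_re
  set θ := -I * log ζ with hθ
  have hθI : θ * I = log ζ := by linear_combination (-log ζ) * I_sq
  have hcos_add : Complex.cos θ + Complex.sin θ * I = ζ := by
    rw [cos_add_sin_I, hθI, exp_log hζ_ne]
  have hcos_sub : Complex.cos θ - Complex.sin θ * I = ζ⁻¹ := by
    rw [cos_sub_sin_I, neg_mul, hθI, Complex.exp_neg, exp_log hζ_ne]
  have hcos : Complex.cos θ = z := by
    linear_combination (hcos_add + hcos_sub + hζ + hζ_inv) / 2
  have hsin : Complex.sin θ = s := by
    linear_combination (-I / 2) * (hcos_add - hcos_sub + hζ - hζ_inv)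
      + (Complex.sin θ - s) * I_sq
  refine ⟨θ, ?_, hcos, ?_⟩
  · simpa [hθ, log_im] using arg_mem_Ioo_zero_pi_div_two_iff.mpr hζ_quadrant
  · rw [K1C, ← hs, ← hζ, hcos, hsin, ← hθI]
    congr 1
    linear_combination z * θ * I_sq

theorem im_K1C_pos {z : ℂ} (hre : 0 < z.re) (him : 0 < z.im) : 0 < (K1C z).im := by
  obtain ⟨θ, hθ, rfl, hK⟩ := exists_cos_eq_and_K1C_eq hre him.ne'
  have hsin : 0 < Real.sin θ.re := Real.sin_pos_of_pos_of_lt_pi hθ.1 (by linarith [hθ.2, pi_pos])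
  have hb : θ.im < 0 := by
    rw [cos_im, neg_pos] at him
    exact sinh_neg_iff.mp (neg_of_mul_neg_right him hsin.le)
  rw [hK, div_ofReal_im, im_cos_mul_pi_sub_add_sin]
  exact div_pos (neg_pos.mpr (sin_mul_sinh_add_cos_mul_neg hθ hb)) pi_pos

theorem im_K1C_neg {z : ℂ} (hre : 0 < z.re) (him : z.im < 0) : (K1C z).im < 0 := by
  obtain ⟨θ, hθ, rfl, hK⟩ := exists_cos_eq_and_K1C_eq hre him.ne
  have hsin : 0 < Real.sin θ.re := Real.sin_pos_of_pos_of_lt_pi hθ.1 (by linarith [hθ.2, pi_pos])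
  have hb : 0 < θ.im := by
    rw [cos_im, neg_lt_zero] at him
    exact sinh_pos_iff.mp (pos_of_mul_pos_right him hsin.le)
  rw [hK, div_ofReal_im, im_cos_mul_pi_sub_add_sin]
  exact div_neg_of_neg_of_pos (neg_neg_iff_pos.mpr (sin_mul_sinh_add_cos_mul_pos hθ hb)) pi_pos

theorem k1_half_plane_signs (z : ℂ) :
    (Complex.arg z ∈ Set.Ioo 0 (Real.pi / 4) → 0 < (K1C z).im) ∧
    (Complex.arg z ∈ Set.Ioo (-(Real.pi / 4)) 0 → (K1C z).im < 0) := by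
  refine ⟨fun h ↦ ?_, fun h ↦ ?_⟩
  · obtain ⟨hre, him⟩ := arg_mem_Ioo_zero_pi_div_two_iff.mp ⟨h.1, by linarith [h.2, pi_pos]⟩
    exact im_K1C_pos hre him
  · have hz : z ≠ 0 := by rintro rfl; simp at h
    have habs : |arg z| < π / 2 :=
      abs_lt.mpr ⟨by linarith [h.1, pi_pos], by linarith [h.2, pi_pos]⟩
    exact im_K1C_neg ((abs_arg_lt_pi_div_two_iff.mp habs).resolve_right hz) (arg_neg_iff.mp h.2)
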